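/- arXiv:2605.06598 — 2 statements merged into one kernel-verified Lean document; each statement's English description precedes it below -/
import Mathlib

section
/- For any positive real parameters c1, c5, c6, c7, β1, β2, β3 and any positive integer Hill coefficients n1, n2, n3, the steady-state polynomial P(z) of the reduced Drosophila cell-cycle model (obtained by clearing denominators in the steady-state equation) has negative leading coefficient and positive constant term: specifically, its unique highest-degree term z^(n1+n2+2n3+1) has negative coefficient −(β1β3+β1+c1) and its constant term is c1·c5^n1·c6^n2·c7^(2n3) > 0, hence P has at least one real root in (0, ∞). -/
set_option maxHeartbeats 1600000


/-- The steady-state polynomial of the reduced Drosophila cell-cycle model,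
obtained from the steady-state equation by clearing denominators, has a
negative leading coefficient and a positive constant term, hence possesses
at least one real root in `(0, ∞)`. -/
theorem steady_state_polynomial_has_positive_root
    (c1 c5 c6 c7 β1 β2 β3 : ℝ) (n1 n2 n3 : ℕ)
    (hc1 : 0 < c1) (hc5 : 0 < c5) (hc6 : 0 < c6) (hc7 : 0 < c7)
    (hβ1 : 0 < β1) (hβ2 : 0 < β2) (hβ3 : 0 < β3)
    (hn1 : 1 ≤ n1) (hn2 : 1 ≤ n2) (hn3 : 1 ≤ n3)
    (P : ℝ → ℝ)
    (hP : ∀ z : ℝ, P z =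
      (-(β1*β3) - β1 - c1) * z^(n1 + n2 + 2*n3 + 1)
      + (β1 + c1) * z^(n1 + n2 + 2*n3)
      + (-(β1*β2*c5^n1) - β1*β3*c5^n1 - β1*c5^n1 - c1*c5^n1) * z^(n2 + 2*n3 + 1)
      + (-(β1*β3*c6^n2) - c1*c6^n2) * z^(n1 + 2*n3 + 1)
      + (-(β1*c7^n3) - 2*c1*c7^n3) * z^(n1 + n2 + n3 + 1)
      + (β1*c7^n3 + 2*c1*c7^n3) * z^(n1 + n2 + n3)
      + (β1*c5^n1 + c1*c5^n1) * z^(n2 + 2*n3)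
      + c1*c6^n2 * z^(n1 + 2*n3)
      + (-(β1*β2*c5^n1*c7^n3) - β1*c5^n1*c7^n3 - 2*c1*c5^n1*c7^n3) * z^(n2 + n3 + 1)
      - 2*c1*c6^n2*c7^n3 * z^(n1 + n3 + 1)
      + (-(β1*β2*c5^n1*c6^n2) - β1*β3*c5^n1*c6^n2 - c1*c5^n1*c6^n2) * z^(2*n3 + 1)
      - c1*c7^(2*n3) * z^(n1 + n2 + 1)
      + 2*c1*c6^n2*c7^n3 * z^(n1 + n3)
      + c1*c7^(2*n3) * z^(n1 + n2)
      + (β1*c5^n1*c7^n3 + 2*c1*c5^n1*c7^n3) * z^(n2 + n3)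
      + c1*c5^n1*c6^n2 * z^(2*n3)
      - c1*c6^n2*c7^(2*n3) * z^(n1 + 1)
      - c1*c5^n1*c7^(2*n3) * z^(n2 + 1)
      + (-(β1*β2*c5^n1*c6^n2*c7^n3) - 2*c1*c5^n1*c6^n2*c7^n3) * z^(n3 + 1)
      + 2*c1*c5^n1*c6^n2*c7^n3 * z^n3
      + c1*c5^n1*c7^(2*n3) * z^n2
      + c1*c6^n2*c7^(2*n3) * z^n1
      - c1*c5^n1*c6^n2*c7^(2*n3) * z
      + c1*c5^n1*c6^n2*c7^(2*n3)) :
    (-(β1*β3) - β1 - c1 < 0) ∧ (0 < c1*c5^n1*c6^n2*c7^(2*n3)) ∧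
      ∃ z : ℝ, 0 < z ∧ P z = 0 := by
  have hA : 0 < β1*β3 + β1 + c1 := by positivity
  have hlead : -(β1*β3) - β1 - c1 < 0 := by nlinarith
  have hconstpos : 0 < c1*c5^n1*c6^n2*c7^(2*n3) := by positivity
  refine ⟨hlead, hconstpos, ?_⟩
  set B : ℝ := (β1 + c1) + (β1*c7^n3 + 2*c1*c7^n3) + (β1*c5^n1 + c1*c5^n1) + c1*c6^n2
      + 2*c1*c6^n2*c7^n3 + c1*c7^(2*n3) + (β1*c5^n1*c7^n3 + 2*c1*c5^n1*c7^n3)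
      + c1*c5^n1*c6^n2 + 2*c1*c5^n1*c6^n2*c7^n3 + c1*c5^n1*c7^(2*n3)
      + c1*c6^n2*c7^(2*n3) + c1*c5^n1*c6^n2*c7^(2*n3) with hBdef
  have hB : 0 < B := by rw [hBdef]; positivity
  -- For z ≥ 1, P z ≤ (B - A z) z^N
  have hbound : ∀ z : ℝ, 1 ≤ z →
      P z ≤ (B - (β1*β3 + β1 + c1)*z) * z^(n1 + n2 + 2*n3) := by
    intro z hz
    have hz0 : (0:ℝ) ≤ z := by linarith
    have key : ∀ (c : ℝ) (e : ℕ), 0 ≤ c → e ≤ n1 + n2 + 2*n3 →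
        c * z^e ≤ c * z^(n1 + n2 + 2*n3) := by
      intro c e hc he
      exact mul_le_mul_of_nonneg_left (pow_le_pow_right₀ hz he) hc
    have k1 := key (β1 + c1) (n1 + n2 + 2*n3) (by positivity) le_rfl
    have k2 := key (β1*c7^n3 + 2*c1*c7^n3) (n1 + n2 + n3) (by positivity) (by omega)
    have k3 := key (β1*c5^n1 + c1*c5^n1) (n2 + 2*n3) (by positivity) (by omega)
    have k4 := key (c1*c6^n2) (n1 + 2*n3) (by positivity) (by omega)
    have k5 := key (2*c1*c6^n2*c7^n3) (n1 + n3) (by positivity) (by omega)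
    have k6 := key (c1*c7^(2*n3)) (n1 + n2) (by positivity) (by omega)
    have k7 := key (β1*c5^n1*c7^n3 + 2*c1*c5^n1*c7^n3) (n2 + n3) (by positivity) (by omega)
    have k8 := key (c1*c5^n1*c6^n2) (2*n3) (by positivity) (by omega)
    have k9 := key (2*c1*c5^n1*c6^n2*c7^n3) n3 (by positivity) (by omega)
    have k10 := key (c1*c5^n1*c7^(2*n3)) n2 (by positivity) (by omega)
    have k11 := key (c1*c6^n2*c7^(2*n3)) n1 (by positivity) (by omega)
    have k12 : c1*c5^n1*c6^n2*c7^(2*n3) ≤ c1*c5^n1*c6^n2*c7^(2*n3) * z^(n1 + n2 + 2*n3) := by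
      simpa using key (c1*c5^n1*c6^n2*c7^(2*n3)) 0 (by positivity) (by omega)
    have t1 : (-(β1*β2*c5^n1) - β1*β3*c5^n1 - β1*c5^n1 - c1*c5^n1) * z^(n2 + 2*n3 + 1) ≤ 0 := by
      have : (0:ℝ) ≤ (β1*β2*c5^n1 + β1*β3*c5^n1 + β1*c5^n1 + c1*c5^n1) * z^(n2 + 2*n3 + 1) := by
        positivity
      linarith
    have t2 : (-(β1*β3*c6^n2) - c1*c6^n2) * z^(n1 + 2*n3 + 1) ≤ 0 := by
      have : (0:ℝ) ≤ (β1*β3*c6^n2 + c1*c6^n2) * z^(n1 + 2*n3 + 1) := by positivity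
      linarith
    have t3 : (-(β1*c7^n3) - 2*c1*c7^n3) * z^(n1 + n2 + n3 + 1) ≤ 0 := by
      have : (0:ℝ) ≤ (β1*c7^n3 + 2*c1*c7^n3) * z^(n1 + n2 + n3 + 1) := by positivity
      linarith
    have t4 : (-(β1*β2*c5^n1*c7^n3) - β1*c5^n1*c7^n3 - 2*c1*c5^n1*c7^n3) * z^(n2 + n3 + 1) ≤ 0 := by
      have : (0:ℝ) ≤ (β1*β2*c5^n1*c7^n3 + β1*c5^n1*c7^n3 + 2*c1*c5^n1*c7^n3) * z^(n2 + n3 + 1) := by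
        positivity
      linarith
    have t5 : (-(β1*β2*c5^n1*c6^n2) - β1*β3*c5^n1*c6^n2 - c1*c5^n1*c6^n2) * z^(2*n3 + 1) ≤ 0 := by
      have : (0:ℝ) ≤ (β1*β2*c5^n1*c6^n2 + β1*β3*c5^n1*c6^n2 + c1*c5^n1*c6^n2) * z^(2*n3 + 1) := by
        positivity
      linarith
    have t6 : (-(β1*β2*c5^n1*c6^n2*c7^n3) - 2*c1*c5^n1*c6^n2*c7^n3) * z^(n3 + 1) ≤ 0 := by
      have : (0:ℝ) ≤ (β1*β2*c5^n1*c6^n2*c7^n3 + 2*c1*c5^n1*c6^n2*c7^n3) * z^(n3 + 1) := by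
        positivity
      linarith
    have m1 : (0:ℝ) ≤ 2*c1*c6^n2*c7^n3 * z^(n1 + n3 + 1) := by positivity
    have m2 : (0:ℝ) ≤ c1*c7^(2*n3) * z^(n1 + n2 + 1) := by positivity
    have m3 : (0:ℝ) ≤ c1*c6^n2*c7^(2*n3) * z^(n1 + 1) := by positivity
    have m4 : (0:ℝ) ≤ c1*c5^n1*c7^(2*n3) * z^(n2 + 1) := by positivity
    have m5 : (0:ℝ) ≤ c1*c5^n1*c6^n2*c7^(2*n3) * z := by positivity
    have hls : (-(β1*β3) - β1 - c1) * z^(n1 + n2 + 2*n3 + 1)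
        = (-(β1*β3) - β1 - c1) * (z^(n1 + n2 + 2*n3) * z) := by rw [pow_succ]
    rw [hP z, hls, hBdef]
    linarith [k1, k2, k3, k4, k5, k6, k7, k8, k9, k10, k11, k12,
      t1, t2, t3, t4, t5, t6, m1, m2, m3, m4, m5]
  -- choose a large positive point
  set z0 : ℝ := 1 + B / (β1*β3 + β1 + c1) with hz0def
  have hz1 : 1 ≤ z0 := by
    have := div_pos hB hA
    rw [hz0def]; linarith
  have hz0pos : 0 < z0 := by linarith
  have hAz : (β1*β3 + β1 + c1) * z0 = (β1*β3 + β1 + c1) + B := by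
    rw [hz0def]; field_simp
  have hzN : 0 < z0^(n1 + n2 + 2*n3) := pow_pos hz0pos _
  have hPz0 : P z0 < 0 := by
    have h := hbound z0 hz1
    have h2 : (B - (β1*β3 + β1 + c1)*z0) * z0^(n1 + n2 + 2*n3)
        = -((β1*β3 + β1 + c1) * z0^(n1 + n2 + 2*n3)) := by rw [hAz]; ring
    rw [h2] at h
    nlinarith [mul_pos hA hzN]
  have hP0 : P 0 = c1*c5^n1*c6^n2*c7^(2*n3) := by
    rw [hP 0]
    simp (disch := omega) [zero_pow]
  have hP0pos : 0 < P 0 := by rw [hP0]; exact hconstpos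
  have hcont : Continuous P := by
    rw [funext hP]
    fun_prop
  have hsub := intermediate_value_Ioo' (le_of_lt hz0pos) hcont.continuousOn
  obtain ⟨z, hzmem, hPz⟩ := hsub ⟨hPz0, hP0pos⟩
  exact ⟨z, hzmem.1, hPz⟩
end

section
/- For the parameter values c1 = 0.002, c5 = 0.02, c6 = c7 = 0.25, β1 = 1.75, β2 = 0.150217, β3 = 7.142857 and all Hill coefficients equal to 2, the degree-9 steady-state polynomial P has exactly one real root in the interval (0, 1]. -/
/-!
On `(0, 0.12]` every term of `P` of odd degree is dominated by the term of degree one lower,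
so `P > 0` there. On `[0.12, ∞)` the derivative `P'` is negative, since `P'(0.12 + t)` has only
negative coefficients as a polynomial in `t`; hence `P` is strictly decreasing there, and it has
exactly one zero in `[0.12, 1]` because `P 0.12 > 0 > P 1`.
-/

open Set

theorem existsUnique_zero_of_pos_of_strictAntiOn {f : ℝ → ℝ} {a b c : ℝ}
    (hac : a < c) (hcb : c ≤ b) (hpos : ∀ x ∈ Ioc a c, 0 < f x)
    (hcont : ContinuousOn f (Icc c b)) (hanti : StrictAntiOn f (Icc c b)) (hb : f b < 0) :
    ∃! x, x ∈ Ioc a b ∧ f x = 0 := by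
  have hc : 0 < f c := hpos c ⟨hac, le_rfl⟩
  obtain ⟨x, hx, hfx⟩ := intermediate_value_Icc' hcb hcont ⟨hb.le, hc.le⟩
  have mem_Icc_of_root : ∀ y ∈ Ioc a b, f y = 0 → y ∈ Icc c b := fun y hy hfy =>
    ⟨not_lt.1 fun hyc => (hpos y ⟨hy.1, hyc.le⟩).ne' hfy, hy.2⟩
  refine ⟨x, ⟨⟨hac.trans_le hx.1, hx.2⟩, hfx⟩, fun y ⟨hy, hfy⟩ => ?_⟩
  exact hanti.injOn (mem_Icc_of_root y hy hfy) hx (hfy.trans hfx.symm)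

noncomputable def steadyStatePoly (z : ℝ) : ℝ :=
  -14.252 * z ^ 9 + 1.752 * z ^ 8 - 0.896805 * z ^ 7
  + 0.110450 * z ^ 6 - 0.000392 * z ^ 5 + 6.73375e-5 * z ^ 4
  - 9.08408e-7 * z ^ 3 + 4.97656e-7 * z ^ 2
  - 1.95312e-10 * z + 1.95312e-10

theorem continuous_steadyStatePoly : Continuous steadyStatePoly := by
  unfold steadyStatePoly
  fun_prop

theorem deriv_steadyStatePoly (z : ℝ) : deriv steadyStatePoly z =
    -128.268 * z ^ 8 + 14.016 * z ^ 7 - 6.277635 * z ^ 6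
    + 0.6627 * z ^ 5 - 0.00196 * z ^ 4 + 2.6935e-4 * z ^ 3
    - 2.725224e-6 * z ^ 2 + 9.95312e-7 * z - 1.95312e-10 := by
  unfold steadyStatePoly
  simp (disch := fun_prop) only [neg_mul, deriv_fun_add, deriv_fun_sub, deriv.fun_neg',
    deriv_fun_mul, deriv_const', zero_mul, deriv_fun_pow, Nat.cast_ofNat, Nat.add_one_sub_one,
    deriv_id'', mul_one, zero_add, pow_one, deriv_const_mul_id', add_zero]
  ring

theorem steadyStatePoly_pos {z : ℝ} (h0 : 0 < z) (h1 : z ≤ 0.12) : 0 < steadyStatePoly z := by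
  unfold steadyStatePoly
  linarith [mul_nonneg (pow_nonneg h0.le 8) (by linarith : (0 : ℝ) ≤ 1.752 - 14.252 * z),
    mul_nonneg (pow_nonneg h0.le 6) (by linarith : (0 : ℝ) ≤ 0.110450 - 0.896805 * z),
    mul_nonneg (pow_nonneg h0.le 4) (by linarith : (0 : ℝ) ≤ 6.73375e-5 - 0.000392 * z),
    mul_nonneg (pow_nonneg h0.le 2) (by linarith : (0 : ℝ) ≤ 4.97656e-7 - 9.08408e-7 * z)]

theorem deriv_steadyStatePoly_neg {z : ℝ} (hz : 0.12 ≤ z) : deriv steadyStatePoly z < 0 := by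
  obtain ⟨t, ht, rfl⟩ : ∃ t, 0 ≤ t ∧ z = 0.12 + t := ⟨z - 0.12, by linarith, by ring⟩
  rw [deriv_steadyStatePoly]
  linarith [pow_nonneg ht 2, pow_nonneg ht 3, pow_nonneg ht 4, pow_nonneg ht 5,
    pow_nonneg ht 6, pow_nonneg ht 7, pow_nonneg ht 8]

theorem strictAntiOn_steadyStatePoly : StrictAntiOn steadyStatePoly (Ici 0.12) :=
  strictAntiOn_of_deriv_neg (convex_Ici _) continuous_steadyStatePoly.continuousOn
    fun _ hz => deriv_steadyStatePoly_neg (interior_subset hz)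

/-- For the parameter values of Table 1 (all Hill coefficients equal to 2),
the degree-9 steady-state polynomial has exactly one real root in `(0, 1]`. -/
theorem steady_state_polynomial_unique_root
    (P : ℝ → ℝ)
    (hP : ∀ z : ℝ, P z =
      -14.252 * z ^ 9 + 1.752 * z ^ 8 - 0.896805 * z ^ 7
      + 0.110450 * z ^ 6 - 0.000392 * z ^ 5 + 6.73375e-5 * z ^ 4
      - 9.08408e-7 * z ^ 3 + 4.97656e-7 * z ^ 2
      - 1.95312e-10 * z + 1.95312e-10) :
    ∃! z : ℝ, (0 < z ∧ z ≤ 1) ∧ P z = 0 := by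
  obtain rfl : P = steadyStatePoly := funext hP
  exact existsUnique_zero_of_pos_of_strictAntiOn (c := 0.12) (by norm_num) (by norm_num)
    (fun _ hz => steadyStatePoly_pos hz.1 hz.2) continuous_steadyStatePoly.continuousOn
    (strictAntiOn_steadyStatePoly.mono Icc_subset_Ici_self) (by norm_num [steadyStatePoly])
end
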